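/- Let R be a unital *-ring and let a, b ∈ R be pseudo core invertible. Suppose a is *-DMP. Let c_a = a a^D a and c_b = b b^D b be the core parts of a and b (a, b are Drazin invertible since they are pseudo core invertible). Then the following are equivalent: (1) a ≤Ⓓ b; (2) c_a ≤⊕ c_b; (3) a^Ⓓ b^Ⓓ = b^Ⓓ a^Ⓓ and a^Ⓓ b = a^Ⓓ a; (4) a^Ⓓ ≤⊕ b^Ⓓ (with respect to the core partial order, a^Ⓓ being core invertible) and a^Ⓓ b = a^Ⓓ a. -/
import Mathlib


variable {R : Type*}

/-- `x` is a `{1,3}`-inverse of `a`. -/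
def Is13Inv [Ring R] [StarRing R] (a x : R) : Prop :=
  a * x * a = a ∧ star (a * x) = a * x

/-- `x` is the Moore–Penrose inverse of `a`. -/
def IsMPInv [Ring R] [StarRing R] (a x : R) : Prop :=
  a * x * a = a ∧ x * a * x = x ∧ star (a * x) = a * x ∧ star (x * a) = x * a

/-- `x` is the group inverse of `a`. -/
def IsGroupInv [Ring R] (a x : R) : Prop :=
  a * x * a = a ∧ x * a * x = x ∧ a * x = x * a

/-- `a` is EP: the group inverse and Moore–Penrose inverse of `a` exist and coincide. -/
def IsEP [Ring R] [StarRing R] (a : R) : Prop :=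
  ∃ x, IsGroupInv a x ∧ IsMPInv a x

/-- `a` is *-DMP with index `m`: `m` is the smallest positive integer with `a^m` EP. -/
def IsStarDMPWithIndex [Ring R] [StarRing R] (a : R) (m : ℕ) : Prop :=
  0 < m ∧ IsEP (a ^ m) ∧ ∀ k, 0 < k → IsEP (a ^ k) → m ≤ k

/-- `a` is *-DMP: some positive power of `a` is EP. -/
def IsStarDMP [Ring R] [StarRing R] (a : R) : Prop :=
  ∃ m, 0 < m ∧ IsEP (a ^ m)

/-- The defining equations of a Drazin inverse `x` of `a` relative to the exponent `m`. -/
def DrazinEqs [Ring R] (a x : R) (m : ℕ) : Prop :=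
  a ^ m * x * a = a ^ m ∧ x * a * x = x ∧ a * x = x * a

/-- `x` is the Drazin inverse of `a` with (minimal) index `m`. -/
def IsDrazinWithIndex [Ring R] (a x : R) (m : ℕ) : Prop :=
  0 < m ∧ DrazinEqs a x m ∧ ∀ k, 0 < k → (∃ y, DrazinEqs a y k) → m ≤ k

/-- The defining equations of a pseudo core inverse `x` of `a` relative to the exponent `m`. -/
def PCoreEqs [Ring R] [StarRing R] (a x : R) (m : ℕ) : Prop :=
  x * a ^ (m + 1) = a ^ m ∧ a * x ^ 2 = x ∧ star (a * x) = a * x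

/-- `x` is the pseudo core inverse of `a` with (minimal) index `m`. -/
def IsPCoreWithIndex [Ring R] [StarRing R] (a x : R) (m : ℕ) : Prop :=
  0 < m ∧ PCoreEqs a x m ∧ ∀ k y, 0 < k → PCoreEqs a y k → m ≤ k

/-- `x` is the pseudo core inverse of `a` (of some index). -/
def IsPCore [Ring R] [StarRing R] (a x : R) : Prop :=
  ∃ m, 0 < m ∧ PCoreEqs a x m

/-- `y` is the core inverse of `c`. -/
def IsCoreInv [Ring R] [StarRing R] (c y : R) : Prop :=
  y * c ^ 2 = c ∧ c * y ^ 2 = y ∧ star (c * y) = c * y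

/-- The core partial order `c ≤⊕ d` for a core invertible `c`. -/
def CoreLE [Ring R] [StarRing R] (c d : R) : Prop :=
  ∃ u, IsCoreInv c u ∧ u * c = u * d ∧ c * u = d * u

/-- The pseudo core order `a ≤Ⓓ b` for a pseudo core invertible `a`. -/
def PCoreLE [Ring R] [StarRing R] (a b : R) : Prop :=
  ∃ x, IsPCore a x ∧ x * a = x * b ∧ a * x = b * x

/-- `x` is the Drazin inverse of `a` (of some index). -/
def IsDrazin [Ring R] (a x : R) : Prop :=
  ∃ m, 0 < m ∧ DrazinEqs a x m

section proofs
set_option linter.unusedSectionVars false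
variable [Ring R] [StarRing R]

private lemma mas {x y z c : R} (h : x * y = z) : x * (y * c) = z * c := by
  rw [← mul_assoc, h]

private lemma sam {x y z c : R} (h : x * y = z) : c * x * y = c * z := by
  rw [mul_assoc, h]

private lemma idem_pow {w : R} (hw : w * w = w) : ∀ j, w ^ (j + 1) = w
  | 0 => pow_one w
  | (j+1) => by rw [pow_succ, idem_pow hw j, hw]

-- x * a^(k+1) = a^k for k ≥ m
private lemma pc_xa {a x : R} {m : ℕ} (h : PCoreEqs a x m) :
    ∀ k, m ≤ k → x * a ^ (k + 1) = a ^ k := by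
  intro k hk
  induction k, hk using Nat.le_induction with
  | base => exact h.1
  | succ k hk ih =>
    rw [pow_succ a (k+1), ← mul_assoc, ih, ← pow_succ]

private lemma pc_xpow_a {a x : R} {m : ℕ} (h : PCoreEqs a x m) :
    ∀ i k, m ≤ k → x ^ i * a ^ (k + i) = a ^ k := by
  intro i
  induction i with
  | zero => intro k hk; simp
  | succ i ih =>
    intro k hk
    have : k + (i+1) = (k + i) + 1 := by omega
    rw [this, pow_succ x i, mul_assoc, pc_xa h (k+i) (le_trans hk (Nat.le_add_right k i)), ih k hk]

-- a * x^(k+2) = x^(k+1)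
private lemma pc_a_xp {a x : R} {m : ℕ} (h : PCoreEqs a x m) :
    ∀ k, a * x ^ (k + 2) = x ^ (k + 1) := by
  intro k
  have h2 : a * x ^ 2 = x := h.2.1
  have : (k : ℕ) + 2 = 2 + k := by omega
  rw [this, pow_add, ← mul_assoc, h2, ← pow_succ']

-- a^k * x^(k+1) = x
private lemma pc_pow_x {a x : R} {m : ℕ} (h : PCoreEqs a x m) :
    ∀ k, a ^ k * x ^ (k + 1) = x := by
  intro k
  induction k with
  | zero => simp
  | succ k ih =>
    rw [pow_succ a k, mul_assoc, pc_a_xp h k, ih]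

-- a^(k+1) * x^(k+1) = a * x
private lemma pc_pow_ax {a x : R} {m : ℕ} (h : PCoreEqs a x m) :
    ∀ k, a ^ (k + 1) * x ^ (k + 1) = a * x := by
  intro k
  induction k with
  | zero => simp
  | succ k ih =>
    rw [pow_succ a (k+1), mul_assoc, pc_a_xp h k, ih]

private lemma pc_xax {a x : R} {m : ℕ} (h : PCoreEqs a x m) : x * a * x = x := by
  conv_lhs => rw [mul_assoc]; rhs; rhs; rw [← pc_pow_x h m]
  rw [← mul_assoc a (a^m), ← pow_succ' a m, ← mul_assoc, pc_xa h m le_rfl, pc_pow_x h m]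

private lemma pc_axa {a x : R} {m : ℕ} (h : PCoreEqs a x m) :
    ∀ k, m ≤ k → a * x * a ^ k = a ^ k := by
  intro k hk
  conv_lhs => rw [← pc_xa h k hk]
  calc a * x * (x * a ^ (k+1)) = a * (x * x) * a ^ (k+1) := by
        rw [mul_assoc, mul_assoc, mul_assoc]
    _ = x * a ^ (k+1) := by rw [← pow_two, h.2.1]
    _ = a ^ k := pc_xa h k hk


-- ===== Drazin generic =====

private lemma dz_comm {a x : R} {s : ℕ} (h : DrazinEqs a x s) : Commute a x := h.2.2

private lemma dz_pow_xa {a x : R} {s : ℕ} (h : DrazinEqs a x s) :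
    ∀ k, s ≤ k → a ^ k * x * a = a ^ k := by
  intro k hk
  induction k, hk using Nat.le_induction with
  | base => exact h.1
  | succ k hk ih =>
    rw [pow_succ' a k, mul_assoc a (a^k) x, mul_assoc a, ih]

-- a^(k+1) * x = a^k  and  x * a^(k+1) = a^k  for k ≥ s
private lemma dz_apow_x {a x : R} {s : ℕ} (h : DrazinEqs a x s) :
    ∀ k, s ≤ k → a ^ (k+1) * x = a ^ k := by
  intro k hk
  have := dz_pow_xa h k hk
  rw [mul_assoc, ← h.2.2, ← mul_assoc, ← pow_succ] at this
  exact this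

private lemma dz_xapow {a x : R} {s : ℕ} (h : DrazinEqs a x s) :
    ∀ k, s ≤ k → x * a ^ (k+1) = a ^ k := by
  intro k hk
  have hc : Commute x (a ^ (k+1)) := ((dz_comm h).symm.pow_right (k+1))
  rw [hc.eq]
  exact dz_apow_x h k hk

private lemma dz_x2a {a x : R} {s : ℕ} (h : DrazinEqs a x s) : x * x * a = x := by
  rw [mul_assoc, ← h.2.2, ← mul_assoc, h.2.1]

private lemma dz_ax2 {a x : R} {s : ℕ} (h : DrazinEqs a x s) : a * (x * x) = x := by
  rw [← mul_assoc, h.2.2, mul_assoc, ← mul_assoc, h.2.1]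

private lemma dz_xpow_a {a x : R} {s : ℕ} (h : DrazinEqs a x s) :
    ∀ j, x ^ (j+1) * a ^ j = x := by
  intro j
  induction j with
  | zero => simp
  | succ j ih =>
    rw [pow_succ' x (j+1), pow_succ a j, mul_assoc, ← mul_assoc (x^(j+1)), ih, ← mul_assoc,
      dz_x2a h]

private lemma dz_apow_xpow {a x : R} {s : ℕ} (h : DrazinEqs a x s) :
    ∀ j, a ^ j * x ^ (j+1) = x := by
  intro j
  induction j with
  | zero => simp
  | succ j ih =>
    rw [pow_succ' a j, pow_succ x (j+1), mul_assoc a (a^j), ← mul_assoc (a^j), ih, dz_ax2 h]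

private lemma dz_ax_idem {a x : R} {s : ℕ} (h : DrazinEqs a x s) :
    (a * x) * (a * x) = a * x := by
  calc (a*x)*(a*x) = a * (x * a * x) := by simp only [mul_assoc]
  _ = a * x := by rw [h.2.1]

private lemma dz_xa_idem {a x : R} {s : ℕ} (h : DrazinEqs a x s) :
    (x * a) * (x * a) = x * a := by
  calc (x*a)*(x*a) = (x * a * x) * a := by simp only [mul_assoc]
  _ = x * a := by rw [h.2.1]

private lemma dz_pow_ax {a x : R} {s : ℕ} (h : DrazinEqs a x s) :
    ∀ j, a ^ (j+1) * x ^ (j+1) = a * x := by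
  intro j
  rw [← (dz_comm h).mul_pow, idem_pow (dz_ax_idem h) j]

private lemma dz_xpow_apow {a x : R} {s : ℕ} (h : DrazinEqs a x s) :
    ∀ j, x ^ (j+1) * a ^ (j+1) = x * a := by
  intro j
  rw [← (dz_comm h).symm.mul_pow, idem_pow (dz_xa_idem h) j]

private lemma dz_unique {a x y : R} {s t : ℕ}
    (hx : DrazinEqs a x s) (hy : DrazinEqs a y t) : x = y := by
  have h1 : x = x * a * y := by
    have hat : a ^ t = a ^ (t+1) * y := (dz_apow_x hy t le_rfl).symm
    calc x = x ^ (t+1) * a ^ t := (dz_xpow_a hx t).symm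
    _ = x ^ (t+1) * (a ^ (t+1) * y) := by rw [← hat]
    _ = (x ^ (t+1) * a ^ (t+1)) * y := by rw [mul_assoc]
    _ = x * a * y := by rw [dz_xpow_apow hx t]
  have h2 : y = x * (a * y) := by
    have has : a ^ s = x * a ^ (s+1) := (dz_xapow hx s le_rfl).symm
    calc y = a ^ s * y ^ (s+1) := (dz_apow_xpow hy s).symm
    _ = x * a ^ (s+1) * y ^ (s+1) := by rw [← has]
    _ = x * (a ^ (s+1) * y ^ (s+1)) := by rw [mul_assoc]
    _ = x * (a * y) := by rw [dz_pow_ax hy s]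
  rw [h1, mul_assoc, ← h2]

-- commuter lemma
private lemma dz_commute {a x c : R} {s : ℕ} (h : DrazinEqs a x s)
    (hc : c * a = a * c) : c * x = x * c := by
  have hca : ∀ j, c * a ^ j = a ^ j * c := fun j =>
    (((show Commute c a from hc)).pow_right j).eq
  -- x * c = (x * a) * (c * x)
  have e1 : x * c = (x * a) * (c * x) := by
    calc x * c = x ^ (s+1) * a ^ s * c := by rw [dz_xpow_a h s]
    _ = x ^ (s+1) * (a ^ s * c) := by rw [mul_assoc]
    _ = x ^ (s+1) * (c * a ^ s) := by rw [hca s]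
    _ = x ^ (s+1) * (c * (a ^ (s+1) * x)) := by rw [dz_apow_x h s le_rfl]
    _ = x ^ (s+1) * (c * a ^ (s+1) * x) := by rw [mul_assoc (c)]
    _ = x ^ (s+1) * (a ^ (s+1) * c * x) := by rw [hca (s+1)]
    _ = (x ^ (s+1) * a ^ (s+1)) * (c * x) := by simp only [mul_assoc]
    _ = (x * a) * (c * x) := by rw [dz_xpow_apow h s]
  have e2 : c * x = (x * c) * (a * x) := by
    calc c * x = c * (a ^ s * x ^ (s+1)) := by rw [dz_apow_xpow h s]
    _ = c * a ^ s * x ^ (s+1) := by rw [mul_assoc]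
    _ = a ^ s * c * x ^ (s+1) := by rw [hca s]
    _ = (x * a ^ (s+1)) * c * x ^ (s+1) := by rw [dz_xapow h s le_rfl]
    _ = x * (a ^ (s+1) * c) * x ^ (s+1) := by rw [mul_assoc x]
    _ = x * (c * a ^ (s+1)) * x ^ (s+1) := by rw [hca (s+1)]
    _ = (x * c) * (a ^ (s+1) * x ^ (s+1)) := by simp only [mul_assoc]
    _ = (x * c) * (a * x) := by rw [dz_pow_ax h s]
  -- substitute e1 into e2 and simplify using x a x = x
  have e3 : c * x = x * a * (c * (x * a * x)) := by
    calc c * x = (x * a * (c * x)) * (a * x) := by conv_lhs => rw [e2, e1]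
    _ = x * a * (c * (x * a * x)) := by simp only [mul_assoc]
  rw [h.2.1] at e3
  rw [e3, ← e1]


-- a * x^(k+1) = x^k for 1 ≤ k
private lemma pc_a_xp' {a x : R} {m : ℕ} (h : PCoreEqs a x m) :
    ∀ k, 1 ≤ k → a * x ^ (k + 1) = x ^ k := by
  intro k hk
  obtain ⟨k, rfl⟩ : ∃ k', k = k' + 1 := ⟨k - 1, by omega⟩
  exact pc_a_xp h k

private lemma pc_drazin {a x : R} {m : ℕ} (h : PCoreEqs a x m) (K : ℕ)
    (hK : m ≤ K) (hK1 : 1 ≤ K) : DrazinEqs a (x ^ (K+1) * a ^ K) K := by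
  have hxa : x ^ (K+1) * a ^ (K+1) = x ^ K * a ^ K := by
    rw [pow_succ x K, mul_assoc, pc_xa h K hK]
  refine ⟨?_, ?_, ?_⟩
  · -- a^K * (x^(K+1) * a^K) * a = a^K
    simp only [← mul_assoc]
    rw [pc_pow_x h K, mul_assoc, ← pow_succ, pc_xa h K hK]
  · -- d * a * d = d
    calc x ^ (K+1) * a ^ K * a * (x ^ (K+1) * a ^ K)
        = x ^ (K+1) * a ^ (K+1) * (x ^ (K+1) * a ^ K) := by
          rw [mul_assoc (x^(K+1)) (a^K) a, ← pow_succ]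
    _ = x ^ K * a ^ K * (x ^ (K+1) * a ^ K) := by rw [hxa]
    _ = x ^ K * (a ^ K * x ^ (K+1)) * a ^ K := by simp only [mul_assoc]
    _ = x ^ K * x * a ^ K := by rw [pc_pow_x h K]
    _ = x ^ (K+1) * a ^ K := by rw [← pow_succ]
  · -- a * d = d * a
    calc a * (x ^ (K+1) * a ^ K) = (a * x ^ (K+1)) * a ^ K := by rw [mul_assoc]
    _ = x ^ K * a ^ K := by rw [pc_a_xp' h K hK1]
    _ = x ^ (K+1) * a ^ (K+1) := hxa.symm
    _ = x ^ (K+1) * (a ^ K * a) := by rw [pow_succ a K]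
    _ = x ^ (K+1) * a ^ K * a := by rw [mul_assoc]

private lemma pc_unique {a x y : R} {mx my : ℕ}
    (hx : PCoreEqs a x mx) (hy : PCoreEqs a y my)
    (hmx : 0 < mx) (hmy : 0 < my) : x = y := by
  set K := mx + my with hKdef
  have hKx : mx ≤ K := Nat.le_add_right _ _
  have hKy : my ≤ K := Nat.le_add_left _ _
  have hK1 : 1 ≤ K := by omega
  -- a*x = a*y
  have e1 : (a * x) * (a * y) = a * y := by
    calc (a*x) * (a*y) = (a*x) * (a ^ (K+1) * y ^ (K+1)) := by rw [pc_pow_ax hy K]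
    _ = (a * x * a ^ (K+1)) * y ^ (K+1) := by simp only [mul_assoc]
    _ = a ^ (K+1) * y ^ (K+1) := by rw [pc_axa hx (K+1) (by omega)]
    _ = a * y := pc_pow_ax hy K
  have e2 : (a * y) * (a * x) = a * x := by
    calc (a*y) * (a*x) = (a*y) * (a ^ (K+1) * x ^ (K+1)) := by rw [pc_pow_ax hx K]
    _ = (a * y * a ^ (K+1)) * x ^ (K+1) := by simp only [mul_assoc]
    _ = a ^ (K+1) * x ^ (K+1) := by rw [pc_axa hy (K+1) (by omega)]
    _ = a * x := pc_pow_ax hx K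
  have haxy : a * x = a * y := by
    calc a * x = star (a * x) := hx.2.2.symm
    _ = star ((a*y) * (a*x)) := by rw [e2]
    _ = star (a*x) * star (a*y) := by rw [star_mul]
    _ = (a*x) * (a*y) := by rw [hx.2.2, hy.2.2]
    _ = a * y := e1
  have hd : x ^ (K+1) * a ^ K = y ^ (K+1) * a ^ K :=
    dz_unique (pc_drazin hx K hKx hK1) (pc_drazin hy K hKy hK1)
  have hrx : x ^ (K+1) * a ^ K * (a * x) = x := by
    calc x ^ (K+1) * a ^ K * (a * x) = x ^ (K+1) * (a ^ K * a) * x := by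
          simp only [mul_assoc]
    _ = x ^ (K+1) * a ^ (K+1) * x := by rw [← pow_succ]
    _ = x ^ K * a ^ K * x := by
          rw [pow_succ x K, mul_assoc (x^K) x, pc_xa hx K hKx]
    _ = x ^ K * a ^ K * (a ^ K * x ^ (K+1)) := by rw [pc_pow_x hx K]
    _ = x ^ K * (a ^ K * a ^ K) * x ^ (K+1) := by simp only [mul_assoc]
    _ = x ^ K * a ^ (K + K) * x ^ (K+1) := by rw [pow_add a K K]
    _ = a ^ K * x ^ (K+1) := by rw [pc_xpow_a hx K K hKx]
    _ = x := pc_pow_x hx K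
  have hry : y ^ (K+1) * a ^ K * (a * y) = y := by
    calc y ^ (K+1) * a ^ K * (a * y) = y ^ (K+1) * (a ^ K * a) * y := by
          simp only [mul_assoc]
    _ = y ^ (K+1) * a ^ (K+1) * y := by rw [← pow_succ]
    _ = y ^ K * a ^ K * y := by
          rw [pow_succ y K, mul_assoc (y^K) y, pc_xa hy K hKy]
    _ = y ^ K * a ^ K * (a ^ K * y ^ (K+1)) := by rw [pc_pow_x hy K]
    _ = y ^ K * (a ^ K * a ^ K) * y ^ (K+1) := by simp only [mul_assoc]
    _ = y ^ K * a ^ (K + K) * y ^ (K+1) := by rw [pow_add a K K]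
    _ = a ^ K * y ^ (K+1) := by rw [pc_xpow_a hy K K hKy]
    _ = y := pc_pow_x hy K
  calc x = x ^ (K+1) * a ^ K * (a * x) := hrx.symm
  _ = y ^ (K+1) * a ^ K * (a * y) := by rw [hd, haxy]
  _ = y := hry


private lemma dmp_pcore {a p da : R} (hDMP : IsStarDMP a)
    (hda : IsDrazin a da) (hp : IsPCore a p) : p = da := by
  obtain ⟨m, hm, hpm⟩ := hp
  obtain ⟨s, hs, hds⟩ := hda
  obtain ⟨r, hr, z, hg, hmp⟩ := hDMP
  obtain ⟨hg1, hg2, hg3⟩ := hg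
  obtain ⟨r', rfl⟩ : ∃ r', r = r' + 1 := ⟨r - 1, by omega⟩
  have hzc : DrazinEqs (a ^ (r'+1)) z 1 := by
    refine ⟨?_, hg2, hg3⟩
    rw [pow_one]; exact hg1
  have hac : a * a ^ (r'+1) = a ^ (r'+1) * a := by
    rw [← pow_succ, ← pow_succ']
  have haz : a * z = z * a := dz_commute hzc hac
  have hzpow : ∀ j, a ^ j * z = z * a ^ j := fun j =>
    (((show Commute z a from haz.symm)).pow_right j).eq.symm
  have hcz2 : a ^ (r'+1) * (z * z) = z := by
    rw [← mul_assoc, hg3, mul_assoc, ← mul_assoc, hg2]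
  have hccz : a ^ (r'+1) * a ^ (r'+1) * z = a ^ (r'+1) := by
    rw [mul_assoc, hg3, ← mul_assoc, hg1]
  have hD : DrazinEqs a (a ^ r' * z) (r' + 1) := by
    refine ⟨?_, ?_, ?_⟩
    · calc a ^ (r'+1) * (a ^ r' * z) * a = a ^ (r'+1) * a ^ r' * (z * a) := by
            simp only [mul_assoc]
      _ = a ^ (r'+1) * a ^ r' * (a * z) := by rw [← haz]
      _ = a ^ (r'+1) * (a ^ r' * a) * z := by simp only [mul_assoc]
      _ = a ^ (r'+1) * a ^ (r'+1) * z := by rw [← pow_succ]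
      _ = a ^ (r'+1) := hccz
    · calc a ^ r' * z * a * (a ^ r' * z) = a ^ r' * (z * a * a ^ r') * z := by
            simp only [mul_assoc]
      _ = a ^ r' * (a * z * a ^ r') * z := by rw [← haz]
      _ = a ^ r' * (a * (z * a ^ r')) * z := by rw [mul_assoc a]
      _ = a ^ r' * (a * (a ^ r' * z)) * z := by rw [← hzpow r']
      _ = a ^ r' * (a * a ^ r') * (z * z) := by simp only [mul_assoc]
      _ = a ^ r' * (a ^ (r'+1) * (z * z)) := by rw [← pow_succ' a r', mul_assoc]
      _ = a ^ r' * z := by rw [hcz2]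
    · calc a * (a ^ r' * z) = a * a ^ r' * z := by rw [mul_assoc]
      _ = a ^ r' * a * z := by rw [← pow_succ, pow_succ' a r']
      _ = a ^ r' * (z * a) := by rw [mul_assoc, ← haz]
      _ = a ^ r' * z * a := by rw [mul_assoc]
  have hdaD : da = a ^ r' * z := dz_unique hds hD
  have hPD : PCoreEqs a (a ^ r' * z) (r' + 1) := by
    refine ⟨?_, ?_, ?_⟩
    · calc a ^ r' * z * a ^ (r'+1+1) = a ^ r' * (a ^ (r'+1+1) * z) := by
            rw [mul_assoc, ← hzpow (r'+1+1)]
      _ = a ^ r' * a ^ (r'+1+1) * z := by rw [← mul_assoc]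
      _ = a ^ (r' + (r'+1+1)) * z := by rw [← pow_add]
      _ = a ^ ((r'+1) + (r'+1)) * z := by
            rw [show r' + (r'+1+1) = (r'+1) + (r'+1) from by omega]
      _ = a ^ (r'+1) * a ^ (r'+1) * z := by rw [pow_add]
      _ = a ^ (r'+1) := hccz
    · calc a * (a ^ r' * z) ^ 2 = a * (a ^ r' * z) * (a ^ r' * z) := by
            rw [pow_two, ← mul_assoc]
      _ = a * a ^ r' * (z * a ^ r') * z := by simp only [mul_assoc]
      _ = a * a ^ r' * (a ^ r' * z) * z := by rw [← hzpow r']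
      _ = a ^ (r'+1) * (a ^ r' * (z * z)) := by
            rw [← pow_succ' a r']; simp only [mul_assoc]
      _ = a ^ (r'+1) * a ^ r' * (z * z) := by rw [← mul_assoc]
      _ = a ^ ((r'+1) + r') * (z * z) := by rw [← pow_add]
      _ = a ^ (r' + (r'+1)) * (z * z) := by rw [Nat.add_comm]
      _ = a ^ r' * (a ^ (r'+1) * (z * z)) := by rw [pow_add, mul_assoc]
      _ = a ^ r' * z := by rw [hcz2]
    · have hacz : a * (a ^ r' * z) = a ^ (r'+1) * z := by
        rw [← mul_assoc, ← pow_succ']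
      rw [hacz]; exact hmp.2.2.1
  have hfin : p = a ^ r' * z := pc_unique hpm hPD hm hr
  rw [hfin, hdaD]


end proofs

/-- Theorem 4.4: let `a`, `b` be pseudo core invertible (with pseudo core inverses
`p`, `q` and Drazin inverses `da`, `db`) and suppose `a` is *-DMP. Then the pseudo core
order `a ≤Ⓓ b` is equivalent to each of the listed conditions, where
`c_a = a a^D a` and `c_b = b b^D b` are the core parts of `a` and `b`. -/
theorem stmt_16 [Ring R] [StarRing R] (a b p q da db : R)
    (hp : IsPCore a p) (hq : IsPCore b q)
    (hda : IsDrazin a da) (hdb : IsDrazin b db)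
    (hDMP : IsStarDMP a) :
    List.TFAE
      [ p * a = p * b ∧ a * p = b * p,
        CoreLE (a * da * a) (b * db * b),
        p * q = q * p ∧ p * b = p * a,
        CoreLE p q ∧ p * b = p * a ] := by
  have hpda : p = da := dmp_pcore hDMP hda hp
  subst hpda
  obtain ⟨m, hm, hpm⟩ := hp
  obtain ⟨n, hn, hqn⟩ := hq
  obtain ⟨s, hs, hds⟩ := hda
  obtain ⟨t, ht, hdt⟩ := hdb
  obtain ⟨K, hKm, hKn, hKs, hKt, hK1⟩ :
      ∃ K, m ≤ K ∧ n ≤ K ∧ s ≤ K ∧ t ≤ K ∧ 1 ≤ K :=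
    ⟨m+n+s+t+1, by omega, by omega, by omega, by omega, by omega⟩
  obtain ⟨K', hKK'⟩ : ∃ K', K = K' + 1 := ⟨K - 1, by omega⟩
  -- basic a-side facts
  have F4 : a * p = p * a := hds.2.2
  have F3 : star (a * p) = a * p := hpm.2.2
  have F6 : a * p * p = p := by have h := hpm.2.1; rwa [pow_two, ← mul_assoc] at h
  have F2 : p * a * p = p := pc_xax hpm
  have F5 : p * (a * p) = p := by rw [← mul_assoc, ← F4, F6]
  have F7 : (a * p) * (a * p) = a * p := by
    calc (a*p)*(a*p) = a*(p*a*p) := by simp only [mul_assoc]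
    _ = a*p := by rw [F2]
  have F10 : a * p * a = a * (a * p) := by rw [mul_assoc, ← F4]
  have hcap : a * p * a * p = a * p := by
    rw [mul_assoc (a*p) a p]; exact F7
  have hpca : p * (a * p * a) = a * p := by
    rw [← mul_assoc, F5, F4]
  have hA : p * ((a * p * a) * (a * p * a)) = a * p * a := by
    calc p * ((a*p*a)*(a*p*a)) = (p*(a*p*a))*(a*p*a) := by rw [← mul_assoc]
    _ = (a*p)*(a*p*a) := by rw [hpca]
    _ = ((a*p)*(a*p))*a := by simp only [mul_assoc]
    _ = (a*p)*a := by rw [F7]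
  have hB : (a * p * a) * (p * p) = p := by
    calc (a*p*a)*(p*p) = ((a*p*a)*p)*p := by rw [← mul_assoc]
    _ = (a*p)*p := by rw [hcap]
    _ = p := F6
  have hcore_ca : IsCoreInv (a*p*a) p :=
    ⟨by rw [pow_two]; exact hA, by rw [pow_two]; exact hB, by rw [hcap]; exact F3⟩
  have hcore_p : IsCoreInv p (a*p*a) :=
    ⟨by rw [pow_two]; exact hB, by rw [pow_two]; exact hA, by rw [hpca]; exact F3⟩
  have hpc_ca : PCoreEqs (a*p*a) p 1 := by
    refine ⟨?_, ?_, ?_⟩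
    · rw [pow_succ, pow_one]; exact hA
    · rw [pow_two]; exact hB
    · rw [hcap]; exact F3
  have hpc_p : PCoreEqs p (a*p*a) 1 := by
    refine ⟨?_, ?_, ?_⟩
    · rw [pow_succ, pow_one]; exact hB
    · rw [pow_two]; exact hA
    · rw [hpca]; exact F3
  -- b-side facts
  have Gq3 : star (b * q) = b * q := hqn.2.2
  have Gq4 : q * b ^ (K+1) = b ^ K := pc_xa hqn K hKn
  have Gq5 : b * q * b ^ K = b ^ K := pc_axa hqn K hKn
  have Gdb_comm : b * db = db * b := hdt.2.2
  have Gdbq : db = q ^ (K+1) * b ^ K := dz_unique hdt (pc_drazin hqn K hKn hK1)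
  have Fg : b ^ K * db ^ K = b * db := by rw [hKK']; exact dz_pow_ax hdt K'
  have Fgq : db * (b * q) = q := by
    calc db * (b*q) = q^(K+1) * b^K * (b*q) := by rw [← Gdbq]
    _ = q^(K+1) * ((b^K * b) * q) := by simp only [mul_assoc]
    _ = q^(K+1) * (b^(K+1) * q) := by rw [← pow_succ]
    _ = q^(K+1) * (b^(K+1) * (b^K * q^(K+1))) := by rw [pc_pow_x hqn K]
    _ = q^(K+1) * (b^(K+1) * b^K) * q^(K+1) := by simp only [mul_assoc]
    _ = q^(K+1) * b^(K + (K+1)) * q^(K+1) := by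
          rw [← pow_add, show K+1+K = K+(K+1) from by omega]
    _ = b^K * q^(K+1) := by rw [pc_xpow_a hqn (K+1) K hKn]
    _ = q := pc_pow_x hqn K
  have Fcbq : b * db * b * q = b * q := by
    calc b*db*b*q = b*(db*(b*q)) := by simp only [mul_assoc]
    _ = b*q := by rw [Fgq]
  have Fhcb : (b*q)*(b*db*b) = b*db*b := by
    have hcbpow : b*db*b = b^(K+1) * db^K := by
      calc b*db*b = b*(db*b) := by rw [mul_assoc]
      _ = b*(b*db) := by rw [← Gdb_comm]
      _ = b*(b^K*db^K) := by rw [Fg]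
      _ = (b*b^K)*db^K := by rw [← mul_assoc]
      _ = b^(K+1)*db^K := by rw [← pow_succ']
    rw [hcbpow]
    calc (b*q)*(b^(K+1)*db^K) = b*(q*b^(K+1))*db^K := by simp only [mul_assoc]
    _ = b*b^K*db^K := by rw [Gq4]
    _ = b^(K+1)*db^K := by rw [← pow_succ']
  -- helpers
  have hegof : p * b = a * p → (a*p)*(b*db) = a*p := by
    intro hpb
    have hepow : ∀ k, p^(k+1) * b^(k+1) = a*p := by
      intro k
      induction k with
      | zero => simpa using hpb
      | succ k ih =>
        calc p^(k+1+1)*b^(k+1+1) = (p*(p^(k+1)*b^(k+1)))*b := by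
              rw [pow_succ' p (k+1), pow_succ b (k+1)]; simp only [mul_assoc]
        _ = (p*(a*p))*b := by rw [ih]
        _ = p*b := by rw [F5]
        _ = a*p := hpb
    have hepowK : p^K * b^K = a*p := by rw [hKK']; exact hepow K'
    calc (a*p)*(b*db) = (p^K*b^K)*(b*db) := by rw [hepowK]
    _ = p^K*((b^K*b)*db) := by simp only [mul_assoc]
    _ = p^K*(b^(K+1)*db) := by rw [← pow_succ]
    _ = p^K*b^K := by rw [dz_apow_x hdt K hKt]
    _ = a*p := hepowK
  have xtrick : (a*p)*(b*q)*(a*p) = (a*p)*(b*q) → (a*p)*(b*db) = a*p →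
      (a*p)*(b*q) = a*p := by
    intro hehe heg
    have hxb : ((a*p) - (a*p)*(b*q)) * b^K = 0 := by
      rw [sub_mul, mul_assoc (a*p) (b*q) (b^K), Gq5, sub_self]
    have hxg : ((a*p) - (a*p)*(b*q)) * (b*db) = 0 := by
      rw [← Fg, ← mul_assoc, hxb, zero_mul]
    have hxe : ((a*p) - (a*p)*(b*q)) * (a*p) = (a*p) - (a*p)*(b*q) := by
      rw [sub_mul, F7, hehe]
    have hz : (a*p) - (a*p)*(b*q) = 0 := by
      calc (a*p) - (a*p)*(b*q) = ((a*p) - (a*p)*(b*q)) * (a*p) := hxe.symm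
      _ = ((a*p) - (a*p)*(b*q)) * ((a*p)*(b*db)) := by rw [heg]
      _ = (((a*p) - (a*p)*(b*q)) * (a*p)) * (b*db) := by rw [← mul_assoc]
      _ = ((a*p) - (a*p)*(b*q)) * (b*db) := by rw [hxe]
      _ = 0 := hxg
    exact (sub_eq_zero.mp hz).symm
  have starstep : (a*p)*(b*q) = a*p → (b*q)*(a*p) = a*p := by
    intro hehE
    calc (b*q)*(a*p) = star ((a*p)*(b*q)) := by rw [star_mul, F3, Gq3]
    _ = star (a*p) := by rw [hehE]
    _ = a*p := F3
  have keylem : p*b = a*p → (a*p)*q = q*(a*p) → (a*p)*(b*q) = a*p →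
      p = q*(a*p) := by
    intro hpb heq hehE
    have heb : (a*p)*b = a*(a*p) := by rw [mul_assoc, hpb]
    have hea : (a*p)*a = a*(a*p) := by rw [mul_assoc, ← F4]
    have heab : ∀ j, (a*p)*a^j = (a*p)*b^j := by
      intro j
      induction j with
      | zero => simp
      | succ j ih =>
        have hcom : (a*p)*a^j = a^j*(a*p) :=
          ((show Commute (a*p) a from hea).pow_right j).eq
        calc (a*p)*a^(j+1) = ((a*p)*a^j)*a := by rw [pow_succ, ← mul_assoc]
        _ = (a^j*(a*p))*a := by rw [hcom]
        _ = a^j*((a*p)*a) := by rw [mul_assoc]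
        _ = a^j*((a*p)*b) := by rw [hea, ← heb]
        _ = (a^j*(a*p))*b := by rw [← mul_assoc]
        _ = ((a*p)*a^j)*b := by rw [← hcom]
        _ = ((a*p)*b^j)*b := by rw [ih]
        _ = (a*p)*b^(j+1) := by rw [mul_assoc, ← pow_succ]
    have k1 : a*(q*(a*p)) = a*p := by
      calc a*(q*(a*p)) = a*((a*p)*q) := by rw [← heq]
      _ = (a*(a*p))*q := by rw [← mul_assoc]
      _ = ((a*p)*b)*q := by rw [← heb]
      _ = (a*p)*(b*q) := by rw [mul_assoc]
      _ = a*p := hehE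
    have hy : PCoreEqs a (q*(a*p)) K := by
      refine ⟨?_, ?_, ?_⟩
      · calc q*(a*p)*a^(K+1) = q*((a*p)*a^(K+1)) := by rw [mul_assoc]
        _ = q*((a*p)*b^(K+1)) := by rw [heab (K+1)]
        _ = (q*(a*p))*b^(K+1) := by rw [← mul_assoc]
        _ = ((a*p)*q)*b^(K+1) := by rw [← heq]
        _ = (a*p)*(q*b^(K+1)) := by rw [mul_assoc]
        _ = (a*p)*b^K := by rw [Gq4]
        _ = (a*p)*a^K := by rw [← heab K]
        _ = a^K := pc_axa hpm K hKm
      · calc a * (q*(a*p))^2 = (a*(q*(a*p)))*(q*(a*p)) := by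
              rw [pow_two, ← mul_assoc]
        _ = (a*p)*(q*(a*p)) := by rw [k1]
        _ = ((a*p)*q)*(a*p) := by rw [← mul_assoc]
        _ = (q*(a*p))*(a*p) := by rw [heq]
        _ = q*((a*p)*(a*p)) := by rw [mul_assoc]
        _ = q*(a*p) := by rw [F7]
      · rw [k1]; exact F3
    exact pc_unique hpm hy hm (by omega)
  -- the (3)-branch machinery
  have three : p*q = q*p → p*b = p*a →
      ((a*p)*q = q*(a*p)) ∧ ((b*q)*(a*p) = a*p) ∧ p = q*(a*p) := by
    intro h31 h32
    have hpb : p*b = a*p := h32.trans F4.symm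
    have heqe : (a*p)*q*(a*p) = (a*p)*q := by
      have e1 : (a*p)*q = a*(q*p) := by rw [mul_assoc, h31]
      calc (a*p)*q*(a*p) = a*(q*p)*(a*p) := by rw [e1]
      _ = a*(q*(p*(a*p))) := by simp only [mul_assoc]
      _ = a*(q*p) := by rw [F5]
      _ = (a*p)*q := e1.symm
    have hqee : (a*p)*(q*(a*p)) = q*(a*p) := by
      have e2 : q*(a*p) = p*(q*b) := by
        calc q*(a*p) = q*(p*b) := by rw [hpb]
        _ = (q*p)*b := by rw [← mul_assoc]
        _ = (p*q)*b := by rw [← h31]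
        _ = p*(q*b) := by rw [mul_assoc]
      calc (a*p)*(q*(a*p)) = (a*p)*(p*(q*b)) := by rw [e2]
      _ = ((a*p)*p)*(q*b) := by rw [← mul_assoc]
      _ = p*(q*b) := by rw [F6]
      _ = q*(a*p) := e2.symm
    have heq : (a*p)*q = q*(a*p) := by
      calc (a*p)*q = (a*p)*q*(a*p) := heqe.symm
      _ = (a*p)*(q*(a*p)) := by rw [mul_assoc]
      _ = q*(a*p) := hqee
    have heb : (a*p)*b = a*(a*p) := by rw [mul_assoc, hpb]
    have hehe : (a*p)*(b*q)*(a*p) = (a*p)*(b*q) := by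
      have e3 : (a*p)*(b*q) = a*((a*p)*q) := by
        calc (a*p)*(b*q) = ((a*p)*b)*q := by rw [← mul_assoc]
        _ = (a*(a*p))*q := by rw [heb]
        _ = a*((a*p)*q) := by rw [mul_assoc]
      calc (a*p)*(b*q)*(a*p) = (a*((a*p)*q))*(a*p) := by rw [e3]
      _ = a*((a*p)*q*(a*p)) := by simp only [mul_assoc]
      _ = a*((a*p)*q) := by rw [heqe]
      _ = (a*p)*(b*q) := e3.symm
    have hehE : (a*p)*(b*q) = a*p := xtrick hehe (hegof hpb)
    exact ⟨heq, starstep hehE, keylem hpb heq hehE⟩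
  -- TFAE
  tfae_have 1 → 2 := by
    rintro ⟨h11, h12⟩
    have hpb : p*b = a*p := h11.symm.trans F4.symm
    have hbp : b*p = a*p := h12.symm
    have hcpb : p*b = b*p := hpb.trans hbp.symm
    have hpdb : p*db = db*p := dz_commute hdt hcpb
    have hedb : (a*p)*db = db*(a*p) := by
      calc (a*p)*db = (p*b)*db := by rw [hpb]
      _ = p*(db*b) := by rw [mul_assoc, Gdb_comm]
      _ = (p*db)*b := by rw [← mul_assoc]
      _ = (db*p)*b := by rw [hpdb]
      _ = db*(p*b) := by rw [mul_assoc]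
      _ = db*(a*p) := by rw [hpb]
    have hebb : (a*p)*b = b*(a*p) := by
      calc (a*p)*b = (p*b)*b := by rw [hpb]
      _ = p*(b*b) := by rw [mul_assoc]
      _ = (b*p)*b := by rw [← mul_assoc, hcpb]
      _ = b*(p*b) := by rw [mul_assoc]
      _ = b*(a*p) := by rw [hpb]
    have heg := hegof hpb
    refine ⟨p, hcore_ca, ?_, ?_⟩
    · rw [hpca]
      symm
      calc p*(b*db*b) = (p*b)*(db*b) := by simp only [mul_assoc]
      _ = (a*p)*(db*b) := by rw [hpb]
      _ = (a*p)*(b*db) := by rw [← Gdb_comm]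
      _ = a*p := heg
    · rw [hcap]
      symm
      calc (b*db*b)*p = (b*db)*(b*p) := by simp only [mul_assoc]
      _ = (b*db)*(a*p) := by rw [hbp]
      _ = b*((a*p)*db) := by rw [mul_assoc, ← hedb]
      _ = (b*(a*p))*db := by rw [← mul_assoc]
      _ = ((a*p)*b)*db := by rw [← hebb]
      _ = (a*p)*(b*db) := by rw [mul_assoc]
      _ = a*p := heg
  tfae_have 2 → 1 := by
    rintro ⟨u, hu, h21, h22⟩
    have hu' : PCoreEqs (a*p*a) u 1 := by
      refine ⟨?_, hu.2.1, hu.2.2⟩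
      rw [pow_succ, pow_one, ← pow_two]
      exact hu.1
    have hueq : u = p := pc_unique hu' hpc_ca one_pos one_pos
    rw [hueq] at h21 h22
    have hpcb : p*(b*db*b) = a*p := by rw [← h21, hpca]
    have hcbp : (b*db*b)*p = a*p := by rw [← h22, hcap]
    have Gdb2 : db*b*db = db := hdt.2.1
    have hcb_eq : b*db*b = b*b*db := by rw [mul_assoc, ← Gdb_comm, ← mul_assoc]
    have hbdd : b*db*db = db := by rw [Gdb_comm]; exact Gdb2
    have h1c : db*(b*b) = b*b*db := by
      calc db*(b*b) = (db*b)*b := by rw [← mul_assoc]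
      _ = (b*db)*b := by rw [← Gdb_comm]
      _ = b*(db*b) := by rw [mul_assoc]
      _ = b*(b*db) := by rw [← Gdb_comm]
      _ = b*b*db := by rw [← mul_assoc]
    have X1 : (b*db*b)*(b*db*b) = (b*db*b)*b := by
      calc (b*db*b)*(b*db*b) = (b*b*db)*(b*b*db) := by rw [hcb_eq]
      _ = b*b*(db*(b*b))*db := by simp only [mul_assoc]
      _ = b*b*(b*b*db)*db := by rw [h1c]
      _ = b*b*(b*(b*(db*db))) := by simp only [mul_assoc]
      _ = b*b*(b*(b*db*db)) := by rw [← mul_assoc b db db]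
      _ = b*b*(b*db) := by rw [hbdd]
      _ = (b*db*b)*b := by rw [hcb_eq]; simp only [mul_assoc]; rw [Gdb_comm]
    have X2 : (b*db*b)*(b*db*b) = b*(b*db*b) := by
      rw [X1, hcb_eq]
      simp only [mul_assoc]
      rw [← Gdb_comm]
    have hpb : p*b = a*p := by
      calc p*b = (p*(a*p))*b := by rw [F5]
      _ = (p*(p*(b*db*b)))*b := by rw [← hpcb]
      _ = p*(p*((b*db*b)*b)) := by simp only [mul_assoc]
      _ = p*(p*((b*db*b)*(b*db*b))) := by rw [← X1]
      _ = p*((p*(b*db*b))*(b*db*b)) := by simp only [mul_assoc]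
      _ = p*((a*p)*(b*db*b)) := by rw [hpcb]
      _ = (p*(a*p))*(b*db*b) := by rw [← mul_assoc]
      _ = p*(b*db*b) := by rw [F5]
      _ = a*p := hpcb
    have hbp : b*p = a*p := by
      calc b*p = b*((a*p)*p) := by conv_lhs => rw [← F6]
      _ = b*(((b*db*b)*p)*p) := by rw [← hcbp]
      _ = (b*(b*db*b))*(p*p) := by simp only [mul_assoc]
      _ = ((b*db*b)*(b*db*b))*(p*p) := by rw [← X2]
      _ = (b*db*b)*(((b*db*b)*p)*p) := by simp only [mul_assoc]
      _ = (b*db*b)*((a*p)*p) := by rw [hcbp]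
      _ = (b*db*b)*p := by rw [F6]
      _ = a*p := hcbp
    refine ⟨?_, ?_⟩
    · rw [hpb]; exact F4.symm
    · exact hbp.symm
  tfae_have 1 → 3 := by
    rintro ⟨h11, h12⟩
    have hpb : p*b = a*p := h11.symm.trans F4.symm
    have hbp : b*p = a*p := h12.symm
    have hcpb : p*b = b*p := hpb.trans hbp.symm
    have hpdb : p*db = db*p := dz_commute hdt hcpb
    have hedb : (a*p)*db = db*(a*p) := by
      calc (a*p)*db = (p*b)*db := by rw [hpb]
      _ = p*(db*b) := by rw [mul_assoc, Gdb_comm]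
      _ = (p*db)*b := by rw [← mul_assoc]
      _ = (db*p)*b := by rw [hpdb]
      _ = db*(p*b) := by rw [mul_assoc]
      _ = db*(a*p) := by rw [hpb]
    have hebb : (a*p)*b = b*(a*p) := by
      calc (a*p)*b = (p*b)*b := by rw [hpb]
      _ = p*(b*b) := by rw [mul_assoc]
      _ = (b*p)*b := by rw [← mul_assoc, hcpb]
      _ = b*(p*b) := by rw [mul_assoc]
      _ = b*(a*p) := by rw [hpb]
    have hecb : (a*p)*(b*db*b) = (b*db*b)*(a*p) := by
      calc (a*p)*(b*db*b) = ((a*p)*b)*(db*b) := by simp only [mul_assoc]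
      _ = (b*(a*p))*(db*b) := by rw [hebb]
      _ = b*(((a*p)*db)*b) := by simp only [mul_assoc]
      _ = b*((db*(a*p))*b) := by rw [hedb]
      _ = (b*db)*((a*p)*b) := by simp only [mul_assoc]
      _ = (b*db)*(b*(a*p)) := by rw [hebb]
      _ = (b*db*b)*(a*p) := by rw [← mul_assoc]
    have hx : (a*p)*(b*q) = (b*db*b)*((a*p)*q) := by
      calc (a*p)*(b*q) = (a*p)*(b*db*b*q) := by rw [Fcbq]
      _ = ((a*p)*(b*db*b))*q := by simp only [mul_assoc]
      _ = ((b*db*b)*(a*p))*q := by rw [hecb]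
      _ = (b*db*b)*((a*p)*q) := by rw [mul_assoc]
    have heh_pre : (b*q)*((a*p)*(b*q)) = (a*p)*(b*q) := by
      calc (b*q)*((a*p)*(b*q)) = (b*q)*((b*db*b)*((a*p)*q)) := by rw [hx]
      _ = ((b*q)*(b*db*b))*((a*p)*q) := by rw [← mul_assoc]
      _ = (b*db*b)*((a*p)*q) := by rw [Fhcb]
      _ = (a*p)*(b*q) := hx.symm
    have hehe_comm : (b*q)*(a*p) = (a*p)*(b*q) := by
      calc (b*q)*(a*p) = star ((a*p)*(b*q)) := by rw [star_mul, F3, Gq3]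
      _ = star ((b*q)*((a*p)*(b*q))) := by rw [heh_pre]
      _ = star ((a*p)*(b*q)) * star (b*q) := by rw [star_mul]
      _ = ((b*q)*(a*p))*(b*q) := by rw [star_mul, F3, Gq3]
      _ = (b*q)*((a*p)*(b*q)) := by rw [mul_assoc]
      _ = (a*p)*(b*q) := heh_pre
    have hehe : (a*p)*(b*q)*(a*p) = (a*p)*(b*q) := by
      calc (a*p)*(b*q)*(a*p) = ((b*q)*(a*p))*(a*p) := by rw [hehe_comm]
      _ = (b*q)*((a*p)*(a*p)) := by rw [mul_assoc]
      _ = (b*q)*(a*p) := by rw [F7]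
      _ = (a*p)*(b*q) := hehe_comm
    have hehE : (a*p)*(b*q) = a*p := xtrick hehe (hegof hpb)
    have hehE2 : (b*q)*(a*p) = a*p := starstep hehE
    have heq : (a*p)*q = q*(a*p) := by
      have heq1 : (a*p)*q = db*(a*p) := by
        calc (a*p)*q = (a*p)*(db*(b*q)) := by rw [Fgq]
        _ = ((a*p)*db)*(b*q) := by rw [← mul_assoc]
        _ = (db*(a*p))*(b*q) := by rw [hedb]
        _ = db*((a*p)*(b*q)) := by rw [mul_assoc]
        _ = db*(a*p) := by rw [hehE]
      have heq2 : q*(a*p) = db*(a*p) := by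
        calc q*(a*p) = (db*(b*q))*(a*p) := by rw [Fgq]
        _ = db*((b*q)*(a*p)) := by rw [mul_assoc]
        _ = db*(a*p) := by rw [hehE2]
      exact heq1.trans heq2.symm
    have hkey : p = q*(a*p) := keylem hpb heq hehE
    refine ⟨?_, h11.symm⟩
    calc p*q = (q*(a*p))*q := by conv_lhs => rw [hkey]
    _ = q*((a*p)*q) := by rw [mul_assoc]
    _ = q*(q*(a*p)) := by rw [heq]
    _ = q*p := by rw [← hkey]
  tfae_have 3 → 1 := by
    rintro ⟨h31, h32⟩
    obtain ⟨heq, hehE2, hkey⟩ := three h31 h32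
    refine ⟨h32.symm, ?_⟩
    have hbp : b*p = a*p := by
      calc b*p = b*(q*(a*p)) := by conv_lhs => rw [hkey]
      _ = (b*q)*(a*p) := by rw [← mul_assoc]
      _ = a*p := hehE2
    exact hbp.symm
  tfae_have 3 → 4 := by
    rintro ⟨h31, h32⟩
    obtain ⟨heq, hehE2, hkey⟩ := three h31 h32
    refine ⟨⟨a*p*a, hcore_p, ?_, ?_⟩, h32⟩
    · rw [hcap]
      symm
      calc (a*p*a)*q = (a*(a*p))*q := by rw [F10]
      _ = a*((a*p)*q) := by rw [mul_assoc]
      _ = a*(q*(a*p)) := by rw [heq]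
      _ = a*p := by rw [← hkey]
    · rw [hpca]
      symm
      calc q*(a*p*a) = (q*(a*p))*a := by simp only [mul_assoc]
      _ = p*a := by rw [← hkey]
      _ = a*p := F4.symm
  tfae_have 4 → 3 := by
    rintro ⟨⟨u, hu, hup, hpu⟩, h42⟩
    have hu' : PCoreEqs p u 1 := by
      refine ⟨?_, hu.2.1, hu.2.2⟩
      rw [pow_succ, pow_one, ← pow_two]
      exact hu.1
    have hueq : u = a*p*a := pc_unique hu' hpc_p one_pos one_pos
    rw [hueq] at hup hpu
    have ha : (a*p*a)*q = a*p := by rw [← hup, hcap]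
    have hb : q*(a*p*a) = a*p := by rw [← hpu, hpca]
    have ha' : a*((a*p)*q) = a*p := by
      have e : (a*p*a)*q = a*((a*p)*q) := by rw [F10, mul_assoc]
      rw [← e]; exact ha
    have hb' : (q*(a*p))*a = a*p := by
      have e : q*(a*p*a) = (q*(a*p))*a := by simp only [mul_assoc]
      rw [← e]; exact hb
    have heq : q*(a*p) = (a*p)*q := by
      calc q*(a*p) = q*(a*((a*p)*q)) := by conv_lhs => rw [← ha']
      _ = (q*(a*(a*p)))*q := by simp only [mul_assoc]
      _ = (q*((a*p)*a))*q := by rw [← F10]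
      _ = ((q*(a*p))*a)*q := by simp only [mul_assoc]
      _ = (a*p)*q := by rw [hb']
    have hkey : p = (a*p)*q := by
      calc p = p*(a*p) := F5.symm
      _ = p*(a*((a*p)*q)) := by rw [ha']
      _ = (p*a)*((a*p)*q) := by rw [← mul_assoc]
      _ = ((a*p)*(a*p))*q := by rw [← F4]; simp only [mul_assoc]
      _ = (a*p)*q := by rw [F7]
    refine ⟨?_, h42⟩
    calc p*q = ((a*p)*q)*q := by conv_lhs => rw [hkey]
    _ = (q*(a*p))*q := by rw [← heq]
    _ = q*((a*p)*q) := by rw [mul_assoc]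
    _ = q*p := by rw [← hkey]
  tfae_finish
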